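/- The left null space of the combination matrix R^c, i.e. the space of vectors α ∈ ℝ^{MK} with α^T R^c = 0, has dimension exactly K − 1. -/
import Mathlib

/-- The combination matrix `R^c`: rows indexed by pairs `(k, m)` with `k ∈ [K]`, `m ∈ [M]`,
columns indexed by tuples `f ∈ [M]^K`; the entry at row `(k, m)` and column `f` is `1` if
`f k = m` and `0` otherwise. -/
def combMatrix (M K : ℕ) : Matrix (Fin K × Fin M) (Fin K → Fin M) ℝ :=
  fun km f => if f km.1 = km.2 then 1 else 0

/-- Summation as a linear map. -/
def sumLM (K : ℕ) : (Fin K → ℝ) →ₗ[ℝ] ℝ where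
  toFun c := ∑ k, c k
  map_add' := by intros; simp [Finset.sum_add_distrib]
  map_smul' := by intros; simp [Finset.mul_sum]

lemma mem_ker_combMatrix_iff (M K : ℕ) (α : Fin K × Fin M → ℝ) :
    α ∈ LinearMap.ker (combMatrix M K).vecMulLinear ↔
      ∀ f : Fin K → Fin M, ∑ k, α (k, f k) = 0 := by
  rw [LinearMap.mem_ker]
  constructor
  · intro h f
    have := congrFun h f
    simpa [Matrix.vecMulLinear_apply, Matrix.vecMul, dotProduct, combMatrix,
      Fintype.sum_prod_type, mul_ite] using this
  · intro h
    funext f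
    simpa [Matrix.vecMulLinear_apply, Matrix.vecMul, dotProduct, combMatrix,
      Fintype.sum_prod_type, mul_ite] using h f

/-- The left null space of `R^c`, i.e. the kernel of `α ↦ α ᵥ* R^c`, has dimension `K - 1`. -/
theorem finrank_leftNullSpace_combMatrix (M K : ℕ) (hM : 0 < M) (hK : 0 < K) :
    Module.finrank ℝ (LinearMap.ker (combMatrix M K).vecMulLinear) = K - 1 := by
  set m₀ : Fin M := ⟨0, hM⟩ with hm₀
  set Q : (Fin K → ℝ) →ₗ[ℝ] (Fin K × Fin M → ℝ) := LinearMap.funLeft ℝ ℝ Prod.fst with hQ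
  have hQinj : Function.Injective Q := by
    intro a b hab
    funext k
    exact congrFun hab (k, m₀)
  have hker : LinearMap.ker (combMatrix M K).vecMulLinear
      = Submodule.map Q (LinearMap.ker (sumLM K)) := by
    ext α
    rw [mem_ker_combMatrix_iff]
    constructor
    · intro h
      have hconst : ∀ k m, α (k, m) = α (k, m₀) := by
        intro k m
        have h1 := h (Function.update (fun _ => m₀) k m)
        have h2 := h (fun _ => m₀)
        have hz : ∑ k', (α (k', Function.update (fun _ => m₀) k m k') - α (k', m₀)) = 0 := by
          rw [Finset.sum_sub_distrib, h1, h2, sub_zero]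
        have hsingle : ∑ k', (α (k', Function.update (fun _ => m₀) k m k') - α (k', m₀))
            = α (k, m) - α (k, m₀) := by
          rw [Finset.sum_eq_single k]
          · simp
          · intro b _ hb
            simp [Function.update_of_ne hb]
          · simp
        have := hsingle.symm.trans hz
        linarith
      refine ⟨fun k => α (k, m₀), ?_, ?_⟩
      · simpa [sumLM] using h (fun _ => m₀)
      · funext km
        obtain ⟨k, m⟩ := km
        simp [hQ, LinearMap.funLeft, hconst k m]
    · rintro ⟨c, hc, rfl⟩ f
      simpa [hQ, LinearMap.funLeft, sumLM] using hc
  rw [hker, (Submodule.equivMapOfInjective Q hQinj _).symm.finrank_eq]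
  have hsurj : Function.Surjective (sumLM K) := by
    intro r
    refine ⟨Pi.single ⟨0, hK⟩ r, ?_⟩
    simp [sumLM]
  have hrn := LinearMap.finrank_range_add_finrank_ker (sumLM K)
  rw [LinearMap.range_eq_top.2 hsurj] at hrn
  simp [Module.finrank_fintype_fun_eq_card] at hrn
  omega
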